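/- arXiv:2112.11720 — 3 statements merged into one kernel-verified Lean document; each statement's English description precedes it below -/
import Mathlib

section
/- If G is a minimal counterexample (as defined in the context), then G has no vertex of degree 3 that has both a neighbor of degree 1 and a neighbor of degree 2. -/
open Set

/-- The degree of a vertex `v` in a simple graph `G`. -/
noncomputable def deg {V : Type*} (G : SimpleGraph V) (v : V) : ℕ :=
  (G.neighborSet v).ncard

/-- `S` is a dominating set of `G`: every vertex not in `S` has a neighbor in `S`. -/
def IsDomSet {V : Type*} (G : SimpleGraph V) (S : Set V) : Prop :=
  ∀ v ∉ S, ∃ u ∈ S, G.Adj u v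

/-- `S` is an independent dominating set of `G`. -/
def IsIndepDomSet {V : Type*} (G : SimpleGraph V) (S : Set V) : Prop :=
  IsDomSet G S ∧ ∀ u ∈ S, ∀ v ∈ S, ¬ G.Adj u v

/-- The independent domination number `i(G)`. -/
noncomputable def indepDomNum {V : Type*} (G : SimpleGraph V) : ℕ :=
  sInf {n | ∃ S : Set V, IsIndepDomSet G S ∧ S.ncard = n}

/-- The domination number `γ(G)`. -/
noncomputable def domNum {V : Type*} (G : SimpleGraph V) : ℕ :=
  sInf {n | ∃ S : Set V, IsDomSet G S ∧ S.ncard = n}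

/-- `G` contains no cycle on 4 vertices as a subgraph. -/
def NoFourCycle {V : Type*} (G : SimpleGraph V) : Prop :=
  ¬ ∃ a b c d : V, a ≠ b ∧ a ≠ c ∧ a ≠ d ∧ b ≠ c ∧ b ≠ d ∧ c ≠ d ∧
      G.Adj a b ∧ G.Adj b c ∧ G.Adj c d ∧ G.Adj d a

/-- `nk G k` is the number of vertices of degree `k` in `G`. -/
noncomputable def nk {V : Type*} (G : SimpleGraph V) (k : ℕ) : ℕ :=
  {v | deg G v = k}.ncard

/-- The weight of a vertex: 14, 9, 6, 5 according as its degree is 0, 1, 2, 3. -/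
noncomputable def wt {V : Type*} (G : SimpleGraph V) (v : V) : ℕ :=
  if deg G v = 0 then 14 else if deg G v = 1 then 9 else if deg G v = 2 then 6 else 5

/-- The weight of a set of vertices: the sum of their weights. -/
noncomputable def wtSet {V : Type*} (G : SimpleGraph V) (X : Set V) : ℕ :=
  ∑ᶠ v ∈ X, wt G v

/-- The weight of the whole graph `G`. -/
noncomputable def wtGraph {V : Type*} (G : SimpleGraph V) : ℕ :=
  wtSet G Set.univ

/-- `G` is a minimal counterexample: subcubic, no 4-cycle, `14·i(G) > w(G)`,
and every proper subgraph `H` of `G` satisfies `14·i(H) ≤ w(H)`. -/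
def MinimalCounterexample {V : Type*} [Fintype V] (G : SimpleGraph V) : Prop :=
  (∀ v, deg G v ≤ 3) ∧ NoFourCycle G ∧ wtGraph G < 14 * indepDomNum G ∧
    ∀ H : G.Subgraph, H ≠ ⊤ → 14 * indepDomNum H.coe ≤ wtGraph H.coe

/-! Let `v` have neighbours `a` (a leaf), `b` (of degree 2, with other neighbour `d`) and `c`.
For an independent set `A` with closed neighbourhood `D`, an independent dominating set of
`G - D` together with `A` is one of `G`, so `i(G) ≤ i(G - D) + |A|`. If moreover no outside
vertex has two neighbours in `D`, deleting `D` raises the weight of each outside vertex adjacent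
to `D` by at most 5, 3 or 1 according as its degree is 1, 2 or 3, and minimality of `G` yields
`14 i(G) ≤ w(G)` as soon as `14 |A|` plus these gains is at most `w(D)`. This budget works for
`A = {v}` (no 4-cycle means `b` and `c` share no outside neighbour) unless `deg c = 3` and
either `d` is a leaf, where `A = {a, b}` works, or both other neighbours of `c` are leaves,
where `A = {a, c}` works. -/

lemma Finset.sum_insert_le {α M : Type*} [DecidableEq α] [AddCommMonoid M] [PartialOrder M]
    [CanonicallyOrderedAdd M] (f : α → M) (a : α) (s : Finset α) :
    ∑ x ∈ insert a s, f x ≤ f a + ∑ x ∈ s, f x := by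
  by_cases ha : a ∈ s
  · rw [Finset.insert_eq_of_mem ha]
    exact le_add_self
  · rw [Finset.sum_insert ha]

def degWeight (d : ℕ) : ℕ :=
  if d = 0 then 14 else if d = 1 then 9 else if d = 2 then 6 else 5

-- `14 - 9`, `9 - 6`, `6 - 5`: the weight increase of a vertex of degree `d` losing a neighbour
def degWeightGain (d : ℕ) : ℕ :=
  if d = 1 then 5 else if d = 2 then 3 else 1

lemma degWeight_pred_le (d : ℕ) : degWeight (d - 1) ≤ degWeight d + degWeightGain d := by
  unfold degWeight degWeightGain; split_ifs <;> omega

lemma degWeightGain_le_five (d : ℕ) : degWeightGain d ≤ 5 := by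
  unfold degWeightGain; split_ifs <;> omega

lemma degWeightGain_le_three {d : ℕ} (hd : d ≠ 1) : degWeightGain d ≤ 3 := by
  unfold degWeightGain; split_ifs <;> omega

section Basic

variable {V : Type*} {G : SimpleGraph V}

lemma wt_eq_degWeight (v : V) : wt G v = degWeight (deg G v) := rfl

lemma wtGraph_eq_sum [Fintype V] (G : SimpleGraph V) : wtGraph G = ∑ v, wt G v := by
  rw [wtGraph, wtSet, finsum_mem_univ, finsum_eq_sum_of_fintype]

lemma isIndepDomSet_of_maximal {S : Set V} (hS : Maximal G.IsIndepSet S) :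
    IsIndepDomSet G S := by
  refine ⟨fun v hv => ?_, fun p hp q hq hpq => hS.1 hp hq (G.ne_of_adj hpq) hpq⟩
  by_contra! hfree
  have hins : G.IsIndepSet (insert v S) :=
    hS.1.insert fun u hu _ => ⟨fun h => hfree u hu h.symm, hfree u hu⟩
  exact hv (hS.2 hins (subset_insert v S) (mem_insert v S))

lemma exists_isIndepDomSet_ncard_eq_indepDomNum [Finite V] (G : SimpleGraph V) :
    ∃ S : Set V, IsIndepDomSet G S ∧ S.ncard = indepDomNum G := by
  obtain ⟨s, hs⟩ := G.maximumIndepSet_exists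
  have hne : {n | ∃ S : Set V, IsIndepDomSet G S ∧ S.ncard = n}.Nonempty :=
    ⟨_, _, isIndepDomSet_of_maximal (hs.isMaximalIndepSet s), rfl⟩
  exact Nat.sInf_mem hne

lemma indepDomNum_le {S : Set V} (hS : IsIndepDomSet G S) : indepDomNum G ≤ S.ncard :=
  Nat.sInf_le ⟨S, hS, rfl⟩

end Basic

section Neighbors

variable {V : Type*} {G : SimpleGraph V} {u v v' : V}

lemma adj_iff_mem_union_sdiff {t : Set V} (ht : t ⊆ G.neighborSet u) (x : V) :
    G.Adj u x ↔ x ∈ t ∪ (G.neighborSet u \ t) := by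
  rw [union_sdiff_cancel ht, SimpleGraph.mem_neighborSet]

variable [Finite V]

lemma adj_iff_of_deg_eq_one (h : deg G u = 1) (hv : G.Adj u v) (x : V) : G.Adj u x ↔ x = v := by
  have ht : {v} ⊆ G.neighborSet u := singleton_subset_iff.2 hv
  have hN : G.neighborSet u \ {v} = ∅ := by
    rw [← ncard_eq_zero, ncard_sdiff ht, ← deg, h, ncard_singleton]
  simp [adj_iff_mem_union_sdiff ht, hN]

lemma exists_adj_iff_of_deg_eq_two (h : deg G u = 2) (hv : G.Adj u v) :
    ∃ v', ∀ x, G.Adj u x ↔ x = v ∨ x = v' := by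
  have ht : {v} ⊆ G.neighborSet u := singleton_subset_iff.2 hv
  obtain ⟨w, hw⟩ : ∃ w, G.neighborSet u \ {v} = {w} := by
    rw [← ncard_eq_one, ncard_sdiff ht, ← deg, h, ncard_singleton]
  exact ⟨w, fun x => by simp [adj_iff_mem_union_sdiff ht, hw, or_comm]⟩

lemma exists_adj_imp_of_deg_le_two (h : deg G u ≤ 2) (hv : G.Adj u v) :
    ∃ v', ∀ x, G.Adj u x → x = v ∨ x = v' := by
  have ht : {v} ⊆ G.neighborSet u := singleton_subset_iff.2 hv
  have hN : (G.neighborSet u \ {v}).Subsingleton := by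
    rw [← ncard_le_one_iff_subsingleton, ncard_sdiff ht, ← deg, ncard_singleton]
    omega
  rcases hN.eq_empty_or_singleton with hN | ⟨w, hw⟩
  · exact ⟨v, by simp [adj_iff_mem_union_sdiff ht, hN]⟩
  · exact ⟨w, fun x => by simp [adj_iff_mem_union_sdiff ht, hw, or_comm]⟩

lemma exists_adj_iff_of_deg_eq_three (h : deg G u = 3) (hv : G.Adj u v) :
    ∃ x y, x ≠ y ∧ ∀ w, G.Adj u w ↔ w = v ∨ w = x ∨ w = y := by
  have ht : {v} ⊆ G.neighborSet u := singleton_subset_iff.2 hv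
  obtain ⟨x, y, hne, hxy⟩ : ∃ x y, x ≠ y ∧ G.neighborSet u \ {v} = {x, y} := by
    rw [← ncard_eq_two, ncard_sdiff ht, ← deg, h, ncard_singleton]
  refine ⟨x, y, hne, fun w => ?_⟩
  simp only [adj_iff_mem_union_sdiff ht, hxy, union_insert, singleton_union, mem_insert_iff,
    mem_singleton_iff]
  tauto

lemma exists_adj_iff_of_deg_eq_three_of_adj (h : deg G u = 3) (hv : G.Adj u v) (hv' : G.Adj u v')
    (hvv' : v ≠ v') : ∃ w, w ≠ v ∧ w ≠ v' ∧ ∀ x, G.Adj u x ↔ x = v ∨ x = v' ∨ x = w := by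
  have ht : {v, v'} ⊆ G.neighborSet u := pair_subset hv hv'
  obtain ⟨w, hw⟩ : ∃ w, G.neighborSet u \ {v, v'} = {w} := by
    rw [← ncard_eq_one, ncard_sdiff ht, ← deg, h, ncard_pair hvv']
  have hwN : w ∈ G.neighborSet u \ {v, v'} := hw ▸ mem_singleton w
  refine ⟨w, fun h => hwN.2 (.inl h), fun h => hwN.2 (.inr h), fun x => ?_⟩
  simp only [adj_iff_mem_union_sdiff ht, hw, union_singleton, mem_insert_iff, mem_singleton_iff]
  tauto

end Neighbors

section DeleteVerts

variable {V : Type*} {G : SimpleGraph V}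

open SimpleGraph.Subgraph in
lemma deg_deleteVerts (D : Set V) (x : ((⊤ : G.Subgraph).deleteVerts D).verts) :
    deg ((⊤ : G.Subgraph).deleteVerts D).coe x = (G.neighborSet x \ D).ncard := by
  have himg : Subtype.val '' ((⊤ : G.Subgraph).deleteVerts D).coe.neighborSet x =
      G.neighborSet x \ D := by
    ext u
    simp only [mem_image, SimpleGraph.mem_neighborSet, coe_adj, deleteVerts_adj, verts_top,
      top_adj, mem_sdiff, mem_univ, true_and]
    constructor
    · rintro ⟨y, ⟨-, hy, hadj⟩, rfl⟩
      exact ⟨hadj, hy⟩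
    · rintro ⟨hadj, hu⟩
      exact ⟨⟨u, by simpa using hu⟩, ⟨x.2.2, hu, hadj⟩, rfl⟩
  rw [deg, ← ncard_image_of_injective _ Subtype.val_injective, himg]

lemma wt_deleteVerts_le [Finite V] {D : Set V} (x : ((⊤ : G.Subgraph).deleteVerts D).verts)
    (hD : (G.neighborSet x ∩ D).Subsingleton) :
    wt ((⊤ : G.Subgraph).deleteVerts D).coe x ≤
      wt G x + (G.neighborSet x ∩ D).ncard * degWeightGain (deg G x) := by
  rw [wt_eq_degWeight, wt_eq_degWeight, deg_deleteVerts, ← sdiff_self_inter]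
  rcases hD.eq_empty_or_singleton with hempty | ⟨p, hp⟩
  · simp [hempty, deg]
  · have hpN : p ∈ G.neighborSet x := (hp ▸ mem_singleton p).1
    rw [hp, ncard_sdiff_singleton_of_mem hpN, ncard_singleton, one_mul]
    exact degWeight_pred_le _

lemma wtGraph_deleteVerts_add_le [Fintype V] (D E : Finset V)
    (hD : ∀ u ∉ D, ∀ p ∈ D, ∀ q ∈ D, G.Adj u p → G.Adj u q → p = q)
    (hE : ∀ u ∉ D, ∀ p ∈ D, G.Adj u p → u ∈ E) :
    wtGraph ((⊤ : G.Subgraph).deleteVerts D).coe + ∑ u ∈ D, wt G u ≤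
      wtGraph G + ∑ u ∈ E, degWeightGain (deg G u) := by
  classical
  have hle_one : ∀ u ∉ D, (G.neighborSet u ∩ D).ncard ≤ 1 := fun u hu =>
    ncard_le_one_iff_subsingleton.2 fun p hp q hq => hD u hu p hp.2 q hq.2 hp.1 hq.1
  have hsub : wtGraph ((⊤ : G.Subgraph).deleteVerts D).coe ≤
      ∑ u ∈ Dᶜ, (wt G u + (G.neighborSet u ∩ D).ncard * degWeightGain (deg G u)) := by
    rw [wtGraph_eq_sum, Finset.sum_subtype (p := (· ∈ ((⊤ : G.Subgraph).deleteVerts D).verts))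
      Dᶜ (by simp)]
    exact Finset.sum_le_sum fun x _ => wt_deleteVerts_le x
      fun p hp q hq => hD x x.2.2 p hp.2 q hq.2 hp.1 hq.1
  have hgain : ∑ u ∈ Dᶜ, (G.neighborSet u ∩ D).ncard * degWeightGain (deg G u) ≤
      ∑ u ∈ E, degWeightGain (deg G u) :=
    calc ∑ u ∈ Dᶜ, (G.neighborSet u ∩ D).ncard * degWeightGain (deg G u)
        = ∑ u ∈ Dᶜ with u ∈ E, (G.neighborSet u ∩ D).ncard * degWeightGain (deg G u) := by
          refine (Finset.sum_filter_of_ne fun u hu hne => ?_).symm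
          obtain ⟨p, hpN, hpD⟩ := nonempty_of_ncard_ne_zero (left_ne_zero_of_mul hne)
          exact hE u (Finset.mem_compl.1 hu) p hpD hpN
      _ ≤ ∑ u ∈ Dᶜ with u ∈ E, degWeightGain (deg G u) := by
          refine Finset.sum_le_sum fun u hu => ?_
          have hu : u ∉ D := Finset.mem_compl.1 (Finset.mem_filter.1 hu).1
          simpa using Nat.mul_le_mul_right (degWeightGain (deg G u)) (hle_one u hu)
      _ ≤ ∑ u ∈ E, degWeightGain (deg G u) :=
          Finset.sum_le_sum_of_subset fun u hu => (Finset.mem_filter.1 hu).2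
  rw [wtGraph_eq_sum G, ← Finset.sum_compl_add_sum D, Finset.sum_add_distrib] at *
  omega

open SimpleGraph.Subgraph in
lemma isIndepDomSet_image_val_union {A D : Set V} (hA : G.IsIndepSet A)
    (hD : ∀ u, u ∈ D ↔ u ∈ A ∨ ∃ w ∈ A, G.Adj w u)
    {T : Set ((⊤ : G.Subgraph).deleteVerts D).verts}
    (hT : IsIndepDomSet ((⊤ : G.Subgraph).deleteVerts D).coe T) :
    IsIndepDomSet G (Subtype.val '' T ∪ A) := by
  have hAD : ∀ {p q}, p ∈ A → G.Adj p q → q ∈ D := fun hp hpq => (hD _).2 (.inr ⟨_, hp, hpq⟩)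
  have hTD : ∀ {p}, p ∈ Subtype.val '' T → p ∉ D := by
    rintro _ ⟨x, -, rfl⟩
    exact x.2.2
  refine ⟨fun u hu => ?_, ?_⟩
  · by_cases huD : u ∈ D
    · rcases (hD u).1 huD with huA | ⟨w, hwA, hwu⟩
      · exact absurd (.inr huA) hu
      · exact ⟨w, .inr hwA, hwu⟩
    · have hx : (⟨u, by simpa using huD⟩ : ((⊤ : G.Subgraph).deleteVerts D).verts) ∉ T :=
        fun hx => hu (.inl ⟨_, hx, rfl⟩)
      obtain ⟨t, htT, htu⟩ := hT.1 _ hx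
      exact ⟨t, .inl ⟨t, htT, rfl⟩, ((⊤ : G.Subgraph).deleteVerts D).adj_sub htu⟩
  · rintro p (⟨x, hxT, rfl⟩ | hpA) q (⟨y, hyT, rfl⟩ | hqA) hpq
    · exact hT.2 x hxT y hyT (by simpa [deleteVerts_adj] using ⟨x.2.2, y.2.2, hpq⟩)
    · exact hTD ⟨x, hxT, rfl⟩ (hAD hqA hpq.symm)
    · exact hTD ⟨y, hyT, rfl⟩ (hAD hpA hpq)
    · exact hA hpA hqA (G.ne_of_adj hpq) hpq

lemma indepDomNum_le_deleteVerts_add [Finite V] {A D : Set V} (hA : G.IsIndepSet A)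
    (hD : ∀ u, u ∈ D ↔ u ∈ A ∨ ∃ w ∈ A, G.Adj w u) :
    indepDomNum G ≤ indepDomNum ((⊤ : G.Subgraph).deleteVerts D).coe + A.ncard := by
  obtain ⟨T, hT, hcard⟩ :=
    exists_isIndepDomSet_ncard_eq_indepDomNum ((⊤ : G.Subgraph).deleteVerts D).coe
  calc indepDomNum G ≤ (Subtype.val '' T ∪ A).ncard :=
        indepDomNum_le (isIndepDomSet_image_val_union hA hD hT)
    _ ≤ (Subtype.val '' T).ncard + A.ncard := ncard_union_le _ _
    _ = _ := by rw [ncard_image_of_injective _ Subtype.val_injective, hcard]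

theorem fourteen_mul_indepDomNum_le_of_deleteVerts [Fintype V]
    (hmin : ∀ H : G.Subgraph, H ≠ ⊤ → 14 * indepDomNum H.coe ≤ wtGraph H.coe)
    {A D E : Finset V} (hA : G.IsIndepSet A) (hAne : A.Nonempty)
    (hD : ∀ u, u ∈ D ↔ u ∈ A ∨ ∃ w ∈ A, G.Adj w u)
    (hD1 : ∀ u ∉ D, ∀ p ∈ D, ∀ q ∈ D, G.Adj u p → G.Adj u q → p = q)
    (hE : ∀ u ∉ D, ∀ p ∈ D, G.Adj u p → u ∈ E)
    (hw : 14 * A.card + ∑ u ∈ E, degWeightGain (deg G u) ≤ ∑ u ∈ D, wt G u) :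
    14 * indepDomNum G ≤ wtGraph G := by
  obtain ⟨a, ha⟩ := hAne
  have hne : (⊤ : G.Subgraph).deleteVerts D ≠ ⊤ := fun h => by
    have ha' : a ∈ ((⊤ : G.Subgraph).deleteVerts D).verts := by
      rw [h]
      exact mem_univ a
    exact ha'.2 ((hD a).2 (.inl ha))
  have hi := indepDomNum_le_deleteVerts_add (D := D) hA (by simpa using hD)
  have hwt := wtGraph_deleteVerts_add_le D E hD1 hE
  have hH := hmin _ hne
  rw [ncard_coe_finset] at hi
  omega

end DeleteVerts
section Star

variable {V : Type*} {G : SimpleGraph V}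

structure IsLeafDegTwoStar (G : SimpleGraph V) (v a b c d : V) : Prop where
  adj_v : ∀ u, G.Adj v u ↔ u = a ∨ u = b ∨ u = c
  adj_a : ∀ u, G.Adj a u ↔ u = v
  adj_b : ∀ u, G.Adj b u ↔ u = v ∨ u = d
  deg_v : deg G v = 3
  deg_a : deg G a = 1
  deg_b : deg G b = 2
  a_ne_b : a ≠ b
  c_ne_a : c ≠ a
  c_ne_b : c ≠ b

lemma exists_isLeafDegTwoStar [Finite V] {v a b : V} (hv : deg G v = 3) (ha : deg G a = 1)
    (hb : deg G b = 2) (hva : G.Adj v a) (hvb : G.Adj v b) :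
    ∃ c d, IsLeafDegTwoStar G v a b c d := by
  have hab : a ≠ b := fun h => by rw [h, hb] at ha; omega
  obtain ⟨c, hca, hcb, hadj_v⟩ := exists_adj_iff_of_deg_eq_three_of_adj hv hva hvb hab
  obtain ⟨d, hadj_b⟩ := exists_adj_iff_of_deg_eq_two hb hvb.symm
  exact ⟨c, d, hadj_v, adj_iff_of_deg_eq_one ha hva.symm, hadj_b, hv, ha, hb, hab, hca, hcb⟩

namespace IsLeafDegTwoStar

variable {v a b c d : V}

lemma adj_va (h : IsLeafDegTwoStar G v a b c d) : G.Adj v a := (h.adj_v a).2 (by simp)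

lemma adj_vb (h : IsLeafDegTwoStar G v a b c d) : G.Adj v b := (h.adj_v b).2 (by simp)

lemma adj_vc (h : IsLeafDegTwoStar G v a b c d) : G.Adj v c := (h.adj_v c).2 (by simp)

variable [Fintype V] [DecidableEq V]

lemma le_of_closedNbhd_v (h : IsLeafDegTwoStar G v a b c d)
    (hmin : ∀ H : G.Subgraph, H ≠ ⊤ → 14 * indepDomNum H.coe ≤ wtGraph H.coe)
    (hC4 : NoFourCycle G) {E : Finset V} (hdE : d ∈ E) (hcE : ∀ u, G.Adj c u → u = v ∨ u ∈ E)
    (hw : 14 + ∑ u ∈ E, degWeightGain (deg G u) ≤ 20 + wt G c) :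
    14 * indepDomNum G ≤ wtGraph G := by
  have hva := h.adj_va
  have hvb := h.adj_vb
  have hvc := h.adj_vc
  obtain ⟨hv, ha, hb, hv3, ha1, hb2, hab, hca, hcb⟩ := h
  have hirr : ∀ x, ¬ G.Adj x x := fun x => G.irrefl
  have hsym : ∀ x y, G.Adj x y ↔ G.Adj y x := G.adj_comm
  have hbc : ∀ u, G.Adj b u → G.Adj c u → u = v := fun u hbu hcu => by
    by_contra huv
    exact hC4 ⟨v, b, u, c, hvb.ne, Ne.symm huv, hvc.ne, G.ne_of_adj hbu, hcb.symm,
      (G.ne_of_adj hcu).symm, hvb, hbu, hcu.symm, hvc.symm⟩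
  refine fourteen_mul_indepDomNum_le_of_deleteVerts hmin (A := {v}) (D := {v, a, b, c}) (E := E)
    (by simp) (by simp) (by simp [hv]) (by grind) (by grind) ?_
  rw [Finset.sum_insert (by grind), Finset.sum_insert (by grind), Finset.sum_pair (by grind)]
  simp [wt, hv3, ha1, hb2] at hw ⊢
  omega

lemma le_of_deg_c_le_two (h : IsLeafDegTwoStar G v a b c d)
    (hmin : ∀ H : G.Subgraph, H ≠ ⊤ → 14 * indepDomNum H.coe ≤ wtGraph H.coe)
    (hC4 : NoFourCycle G) (hc : deg G c ≤ 2) : 14 * indepDomNum G ≤ wtGraph G := by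
  obtain ⟨x, hx⟩ := exists_adj_imp_of_deg_le_two hc h.adj_vc.symm
  refine h.le_of_closedNbhd_v hmin hC4 (E := {d, x}) (by simp)
    (fun u hu => (hx u hu).imp_right fun hux => by simp [hux]) ?_
  calc 14 + ∑ u ∈ {d, x}, degWeightGain (deg G u)
      ≤ 14 + (degWeightGain (deg G d) + degWeightGain (deg G x)) := by
        simpa using Finset.sum_insert_le (fun u => degWeightGain (deg G u)) d {x}
    _ ≤ 20 + wt G c := by
        have := degWeightGain_le_five (deg G d)
        have := degWeightGain_le_five (deg G x)
        have : 6 ≤ wt G c := by unfold wt; split_ifs <;> omega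
        omega

lemma le_of_deg_c_eq_three (h : IsLeafDegTwoStar G v a b c d)
    (hmin : ∀ H : G.Subgraph, H ≠ ⊤ → 14 * indepDomNum H.coe ≤ wtGraph H.coe)
    (hC4 : NoFourCycle G) {x y : V} (hc3 : deg G c = 3)
    (hc : ∀ u, G.Adj c u ↔ u = v ∨ u = x ∨ u = y) (hd : deg G d ≠ 1)
    (hxy : ¬ (deg G x = 1 ∧ deg G y = 1)) : 14 * indepDomNum G ≤ wtGraph G := by
  refine h.le_of_closedNbhd_v hmin hC4 (E := {d, x, y}) (by simp)
    (fun u hu => by have := (hc u).1 hu; simp; tauto) ?_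
  have hsum : ∑ u ∈ {d, x, y}, degWeightGain (deg G u) ≤
      degWeightGain (deg G d) + (degWeightGain (deg G x) + degWeightGain (deg G y)) :=
    (Finset.sum_insert_le _ d _).trans <| Nat.add_le_add_left
      (by simpa using Finset.sum_insert_le (fun u => degWeightGain (deg G u)) x {y}) _
  have hxy : degWeightGain (deg G x) + degWeightGain (deg G y) ≤ 8 := by
    by_cases hx : deg G x = 1
    · have := degWeightGain_le_five (deg G x)
      have := degWeightGain_le_three (fun hy => hxy ⟨hx, hy⟩)
      omega
    · have := degWeightGain_le_three hx
      have := degWeightGain_le_five (deg G y)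
      omega
  have := degWeightGain_le_three hd
  have : wt G c = 5 := by simp [wt, hc3]
  omega

lemma le_of_deg_d_eq_one (h : IsLeafDegTwoStar G v a b c d)
    (hmin : ∀ H : G.Subgraph, H ≠ ⊤ → 14 * indepDomNum H.coe ≤ wtGraph H.coe)
    (hd1 : deg G d = 1) (hc3 : deg G c = 3) : 14 * indepDomNum G ≤ wtGraph G := by
  have hva := h.adj_va
  have hvb := h.adj_vb
  have hvc := h.adj_vc
  obtain ⟨hv, ha, hb, hv3, ha1, hb2, hab, hca, hcb⟩ := h
  have hbd : G.Adj b d := (hb d).2 (by simp)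
  have hd := adj_iff_of_deg_eq_one hd1 hbd.symm
  have hirr : ∀ x, ¬ G.Adj x x := fun x => G.irrefl
  have hsym : ∀ x y, G.Adj x y ↔ G.Adj y x := G.adj_comm
  refine fourteen_mul_indepDomNum_le_of_deleteVerts hmin (A := {a, b}) (D := {v, a, b, d})
    (E := {c}) ?_ (by simp) (by simp only [Finset.mem_insert, Finset.mem_singleton]; grind)
    (by simp only [Finset.mem_insert, Finset.mem_singleton]; grind)
    (by simp only [Finset.mem_insert, Finset.mem_singleton]; grind) ?_
  · intro p hp q hq _ hpq
    simp only [Finset.coe_insert, Finset.coe_singleton, mem_insert_iff, mem_singleton_iff] at hp hq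
    grind
  rw [Finset.sum_insert (by grind), Finset.sum_insert (by grind), Finset.sum_pair (by grind),
    Finset.card_pair hab, Finset.sum_singleton]
  simp [wt, degWeightGain, hv3, ha1, hb2, hd1, hc3]

lemma le_of_leaves_at_c (h : IsLeafDegTwoStar G v a b c d)
    (hmin : ∀ H : G.Subgraph, H ≠ ⊤ → 14 * indepDomNum H.coe ≤ wtGraph H.coe)
    {x y : V} (hc3 : deg G c = 3) (hc : ∀ u, G.Adj c u ↔ u = v ∨ u = x ∨ u = y)
    (hxy : x ≠ y) (hx1 : deg G x = 1) (hy1 : deg G y = 1) : 14 * indepDomNum G ≤ wtGraph G := by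
  have hva := h.adj_va
  have hvb := h.adj_vb
  have hvc := h.adj_vc
  obtain ⟨hv, ha, hb, hv3, ha1, hb2, hab, hca, hcb⟩ := h
  have hcx : G.Adj c x := (hc x).2 (by simp)
  have hcy : G.Adj c y := (hc y).2 (by simp)
  have hx := adj_iff_of_deg_eq_one hx1 hcx.symm
  have hy := adj_iff_of_deg_eq_one hy1 hcy.symm
  have hirr : ∀ x, ¬ G.Adj x x := fun x => G.irrefl
  have hsym : ∀ x y, G.Adj x y ↔ G.Adj y x := G.adj_comm
  refine fourteen_mul_indepDomNum_le_of_deleteVerts hmin (A := {a, c}) (D := {v, a, c, x, y})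
    (E := {b}) ?_ (by simp) (by simp only [Finset.mem_insert, Finset.mem_singleton]; grind)
    (by simp only [Finset.mem_insert, Finset.mem_singleton]; grind)
    (by simp only [Finset.mem_insert, Finset.mem_singleton]; grind) ?_
  · intro p hp q hq _ hpq
    simp only [Finset.coe_insert, Finset.coe_singleton, mem_insert_iff, mem_singleton_iff] at hp hq
    grind
  rw [Finset.sum_insert (by grind), Finset.sum_insert (by grind), Finset.sum_insert (by grind),
    Finset.sum_pair hxy, Finset.card_pair hca.symm, Finset.sum_singleton]
  simp [wt, degWeightGain, hv3, ha1, hb2, hx1, hy1, hc3]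

end IsLeafDegTwoStar

end Star

/-- A minimal counterexample has no vertex of degree 3 with both a neighbor of
degree 1 and a neighbor of degree 2. -/
theorem no_deg_three_vertex_with_deg_one_and_deg_two_neighbors {V : Type*} [Fintype V]
    (G : SimpleGraph V) (hG : MinimalCounterexample G) :
    ¬ ∃ v a b : V, deg G v = 3 ∧ G.Adj v a ∧ G.Adj v b ∧ deg G a = 1 ∧ deg G b = 2 := by
  classical
  rintro ⟨v, a, b, hv3, hva, hvb, ha1, hb2⟩
  obtain ⟨hsub, hC4, hbig, hmin⟩ := hG
  refine hbig.not_ge ?_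
  obtain ⟨c, d, h⟩ := exists_isLeafDegTwoStar hv3 ha1 hb2 hva hvb
  rcases (hsub c).lt_or_eq with hc | hc3
  · exact h.le_of_deg_c_le_two hmin hC4 (by omega)
  obtain ⟨x, y, hxy, hc⟩ := exists_adj_iff_of_deg_eq_three hc3 h.adj_vc.symm
  by_cases hd1 : deg G d = 1
  · exact h.le_of_deg_d_eq_one hmin hd1 hc3
  by_cases hxy1 : deg G x = 1 ∧ deg G y = 1
  · exact h.le_of_leaves_at_c hmin hc3 hc hxy hxy1.1 hxy1.2
  · exact h.le_of_deg_c_eq_three hmin hC4 hc3 hc hd1 hxy1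
end

section
/- If G is a minimal counterexample (as defined in the context), then G contains no triangle v,u,w such that v has a neighbor of degree 1. -/
open Set

/-!
Let `v` lie on a triangle `vuw` and have a neighbour `x` of degree one. As `G` is subcubic,
`N[v] = {v, u, w, x}`; let `H = G - N[v]`, a proper subgraph. Adding `v` to an independent
dominating set of `H` dominates `G`, so `i(G) ≤ i(H) + 1`. The four deleted vertices weigh at
least `5 + 5 + 5 + 9 = 24`. Only `u` and `w` have neighbours in `H`, at most one each, and deleting
an edge raises a weight by at most `5`, so `w(H) ≤ w(G) - 24 + 10`. Hence
`14 i(G) ≤ w(H) + 14 ≤ w(G)`, contradicting `w(G) < 14 i(G)`.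
-/

namespace SimpleGraph

variable {V : Type*} (G : SimpleGraph V)

lemma isIndepDomSet_iff {S : Set V} : IsIndepDomSet G S ↔ IsDomSet G S ∧ G.IsIndepSet S :=
  and_congr_right fun _ =>
    ⟨fun h _ ha _ hb _ => h _ ha _ hb, fun h _ ha _ hb hab => h ha hb hab.ne hab⟩

lemma isIndepDomSet_of_maximal_isIndepSet {S : Set V} (hS : Maximal G.IsIndepSet S) :
    IsIndepDomSet G S := by
  refine G.isIndepDomSet_iff.2 ⟨fun v hv => ?_, hS.prop⟩
  by_contra! hdom
  have hins : G.IsIndepSet (insert v S) :=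
    pairwise_insert.2 ⟨hS.prop, fun b hb _ => ⟨fun hvb => hdom b hb (G.adj_symm hvb),
      hdom b hb⟩⟩
  exact hv (hS.mem_of_prop_insert hins)

lemma exists_isIndepDomSet_ncard_eq_indepDomNum [Finite V] :
    ∃ S : Set V, IsIndepDomSet G S ∧ S.ncard = indepDomNum G := by
  obtain ⟨S, -, hS⟩ := Finite.exists_le_maximal (p := G.IsIndepSet) (a := ∅) (by simp)
  exact Nat.sInf_mem (s := {n | ∃ S : Set V, IsIndepDomSet G S ∧ S.ncard = n})
    ⟨S.ncard, S, G.isIndepDomSet_of_maximal_isIndepSet hS, rfl⟩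

lemma induce_top_ne_top {s : Set V} {v : V} (hv : v ∉ s) : (⊤ : G.Subgraph).induce s ≠ ⊤ :=
  fun h => hv <| show v ∈ ((⊤ : G.Subgraph).induce s).verts by rw [h]; trivial

lemma indepDomNum_le_indepDomNum_induce_add_one [Finite V] (v : V) :
    indepDomNum G ≤
      indepDomNum ((⊤ : G.Subgraph).induce (insert v (G.neighborSet v))ᶜ).coe + 1 := by
  set F := (insert v (G.neighborSet v))ᶜ
  obtain ⟨S, hS, hcard⟩ :=
    exists_isIndepDomSet_ncard_eq_indepDomNum ((⊤ : G.Subgraph).induce F).coe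
  rw [isIndepDomSet_iff] at hS
  have hvF : v ∉ F := fun h => h (mem_insert v _)
  have hvS : v ∉ Subtype.val '' S := fun ⟨y, _, hy⟩ => hvF (hy ▸ y.2)
  have hdom : IsDomSet G (insert v (Subtype.val '' S)) := by
    intro y hy
    by_cases hyF : y ∈ F
    · obtain ⟨z, hzS, hzy⟩ :=
        hS.1 ⟨y, hyF⟩ fun h => hy (mem_insert_of_mem _ ⟨_, h, rfl⟩)
      exact ⟨z, mem_insert_of_mem _ ⟨z, hzS, rfl⟩, Subgraph.coe_adj_sub _ _ _ hzy⟩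
    · refine ⟨v, mem_insert v _, ?_⟩
      rcases not_not.1 hyF with rfl | hvy
      · exact absurd (mem_insert _ _) hy
      · exact hvy
  have hind : G.IsIndepSet (insert v (Subtype.val '' S)) := by
    have hvF' : ∀ y : F, ¬ G.Adj v y := fun y hvy => y.2 (mem_insert_of_mem _ hvy)
    refine pairwise_insert.2 ⟨(G.isIndepSet_induce).1 hS.2, ?_⟩
    rintro _ ⟨y, -, rfl⟩ -
    exact ⟨hvF' y, fun hyv => hvF' y (G.adj_symm hyv)⟩
  calc indepDomNum G ≤ (insert v (Subtype.val '' S)).ncard :=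
        Nat.sInf_le ⟨_, G.isIndepDomSet_iff.2 ⟨hdom, hind⟩, rfl⟩
    _ = indepDomNum ((⊤ : G.Subgraph).induce F).coe + 1 := by
        rw [ncard_insert_of_notMem hvS, ncard_image_of_injective _ Subtype.val_injective, hcard]

def degWeight (d : ℕ) : ℕ :=
  if d = 0 then 14 else if d = 1 then 9 else if d = 2 then 6 else 5

lemma wt_eq_degWeight (v : V) : wt G v = degWeight (deg G v) := rfl

lemma five_le_degWeight (d : ℕ) : 5 ≤ degWeight d := by
  unfold degWeight; split_ifs <;> omega

lemma degWeight_le_add_of_le {d e : ℕ} (h : e ≤ d) :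
    degWeight e ≤ degWeight d + 5 * (d - e) := by
  unfold degWeight; split_ifs <;> omega

lemma deg_eq_degree (v : V) [Fintype (G.neighborSet v)] : deg G v = G.degree v :=
  ncard_eq_toFinset_card' _

lemma deg_induce_top (s : Set V) (y : ((⊤ : G.Subgraph).induce s).verts) :
    deg ((⊤ : G.Subgraph).induce s).coe y = (G.neighborSet y ∩ s).ncard := by
  unfold deg
  rw [← ncard_image_of_injective _ Subtype.val_injective]
  congr 1
  ext z
  constructor
  · rintro ⟨z, hz, rfl⟩
    exact ⟨Subgraph.coe_adj_sub _ _ _ hz, z.2⟩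
  · rintro ⟨hyz, hz⟩
    exact ⟨⟨z, hz⟩, ⟨y.2, hz, hyz⟩, rfl⟩

section Fintype

open Finset

variable [Fintype V]

lemma wtGraph_eq_sum : wtGraph G = ∑ v, wt G v := by
  rw [wtGraph, wtSet, finsum_mem_univ, finsum_eq_sum_of_fintype]

variable [DecidableEq V] [DecidableRel G.Adj]

lemma wtGraph_induce_top (t : Finset V) :
    wtGraph ((⊤ : G.Subgraph).induce t).coe =
      ∑ y ∈ t, degWeight #(G.neighborFinset y ∩ t) := by
  rw [wtGraph, wtSet, finsum_mem_univ, ← finsum_mem_coe_finset,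
    ← finsum_set_coe_eq_finsum_mem]
  refine finsum_congr fun y => ?_
  rw [wt_eq_degWeight, deg_induce_top, ← ncard_coe_finset, coe_inter, coe_neighborFinset]

lemma sum_card_neighborFinset_sdiff (t : Finset V) :
    ∑ y ∈ t, #(G.neighborFinset y \ t) = ∑ z ∈ tᶜ, #(G.neighborFinset z ∩ t) := by
  convert sum_card_bipartiteAbove_eq_sum_card_bipartiteBelow (s := t) (t := tᶜ) (r := G.Adj)
    using 3 with y - z -
  · ext z; simp [mem_bipartiteAbove, and_comm]
  · ext y; simp [mem_bipartiteBelow, adj_comm, and_comm]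

lemma wtGraph_induce_top_le (t : Finset V) :
    wtGraph ((⊤ : G.Subgraph).induce t).coe ≤
      ∑ y ∈ t, wt G y + 5 * ∑ z ∈ tᶜ, #(G.neighborFinset z ∩ t) := by
  rw [wtGraph_induce_top, ← sum_card_neighborFinset_sdiff, mul_sum, ← sum_add_distrib]
  refine sum_le_sum fun y _ => ?_
  have hsplit := card_sdiff_add_card_inter (G.neighborFinset y) t
  rw [wt_eq_degWeight, deg_eq_degree, ← card_neighborFinset_eq_degree]
  have := degWeight_le_add_of_le
    (Finset.card_le_card (inter_subset_left (s₁ := G.neighborFinset y) (s₂ := t)))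
  omega

lemma card_neighborFinset_inter_add_card_le {z : V} {s t : Finset V}
    (hs : s ⊆ G.neighborFinset z) (hst : Disjoint s t) :
    #(G.neighborFinset z ∩ t) + #s ≤ G.degree z := by
  rw [← card_union_of_disjoint (disjoint_of_subset_left inter_subset_right hst.symm)]
  exact Finset.card_le_card (union_subset inter_subset_left hs)

lemma ne_of_adj_of_adj_of_degree_eq_one {u a b x : V} (hua : G.Adj u a) (hub : G.Adj u b)
    (hab : a ≠ b) (hx : G.degree x = 1) : u ≠ x := by
  rintro rfl
  have := Finset.card_le_card (s := {a, b}) (t := G.neighborFinset u)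
    (by simp [Finset.insert_subset_iff, hua, hub])
  rw [card_pair hab, card_neighborFinset_eq_degree] at this
  omega

section PendantTriangle

variable {v u w x : V} (hvu : G.Adj v u) (huw : G.Adj u w) (hwv : G.Adj w v) (hvx : G.Adj v x)
  (hx : G.degree x = 1) (hv : G.degree v ≤ 3)
include hvu huw hwv hvx hx hv

lemma insert_neighborFinset_eq_of_pendant_triangle :
    insert v (G.neighborFinset v) = {v, u, w, x} := by
  have hux := G.ne_of_adj_of_adj_of_degree_eq_one hvu.symm huw hwv.ne.symm hx
  have hwx := G.ne_of_adj_of_adj_of_degree_eq_one hwv huw.symm hvu.ne hx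
  congr 1
  symm
  refine eq_of_subset_of_card_le (by simp [Finset.insert_subset_iff, hvu, hwv.symm, hvx]) ?_
  rw [card_neighborFinset_eq_degree, card_insert_of_notMem (by simp [huw.ne, hux]),
    card_pair hwx]
  exact hv

lemma sum_insert_neighborFinset_of_pendant_triangle {M : Type*} [AddCommMonoid M] (f : V → M) :
    ∑ z ∈ insert v (G.neighborFinset v), f z = f v + (f u + (f w + f x)) := by
  have hux := G.ne_of_adj_of_adj_of_degree_eq_one hvu.symm huw hwv.ne.symm hx
  have hwx := G.ne_of_adj_of_adj_of_degree_eq_one hwv huw.symm hvu.ne hx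
  rw [G.insert_neighborFinset_eq_of_pendant_triangle hvu huw hwv hvx hx hv,
    sum_insert (by simp [hvu.ne, hwv.ne.symm, hvx.ne]), sum_insert (by simp [huw.ne, hux]),
    sum_pair hwx]

lemma sum_wt_insert_neighborFinset_of_pendant_triangle :
    24 ≤ ∑ z ∈ insert v (G.neighborFinset v), wt G z := by
  rw [G.sum_insert_neighborFinset_of_pendant_triangle hvu huw hwv hvx hx hv]
  have hwtx : wt G x = 9 := by rw [wt_eq_degWeight, deg_eq_degree, hx]; rfl
  have := five_le_degWeight (deg G v)
  have := five_le_degWeight (deg G u)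
  have := five_le_degWeight (deg G w)
  simp only [wt_eq_degWeight] at hwtx ⊢
  omega

lemma sum_card_neighborFinset_inter_compl_of_pendant_triangle (hu : G.degree u ≤ 3)
    (hw : G.degree w ≤ 3) :
    ∑ z ∈ insert v (G.neighborFinset v),
      #(G.neighborFinset z ∩ (insert v (G.neighborFinset v))ᶜ) ≤ 2 := by
  have hQ := G.insert_neighborFinset_eq_of_pendant_triangle hvu huw hwv hvx hx hv
  have key {z : V} {s : Finset V} (hs : s ⊆ G.neighborFinset z) (hsQ : s ⊆ {v, u, w, x}) :
      #(G.neighborFinset z ∩ {v, u, w, x}ᶜ) + #s ≤ G.degree z :=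
    G.card_neighborFinset_inter_add_card_le hs (disjoint_of_subset_left hsQ disjoint_compl_right)
  have hv' := key (subset_refl _) (by rw [← hQ]; exact subset_insert _ _)
  have hu' := key (z := u) (s := {v, w}) (by simp [Finset.insert_subset_iff, hvu.symm, huw])
    (by simp [Finset.insert_subset_iff])
  have hw' := key (z := w) (s := {v, u}) (by simp [Finset.insert_subset_iff, hwv, huw.symm])
    (by simp [Finset.insert_subset_iff])
  have hx' := key (z := x) (s := {v}) (by simp [hvx.symm]) (by simp)
  rw [card_neighborFinset_eq_degree] at hv'
  rw [card_pair hwv.ne.symm] at hu'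
  rw [card_pair hvu.ne] at hw'
  rw [Finset.card_singleton] at hx'
  rw [G.sum_insert_neighborFinset_of_pendant_triangle hvu huw hwv hvx hx hv, hQ]
  omega

end PendantTriangle

end Fintype

end SimpleGraph

/-- A minimal counterexample contains no triangle `v,u,w` such that `v` has a
neighbor of degree 1. -/
theorem no_triangle_with_deg_one_neighbor {V : Type*} [Fintype V] (G : SimpleGraph V)
    (hG : MinimalCounterexample G) :
    ¬ ∃ v u w x : V, G.Adj v u ∧ G.Adj u w ∧ G.Adj w v ∧ G.Adj v x ∧ deg G x = 1 := by
  classical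
  obtain ⟨hdeg, -, hcounter, hminimal⟩ := hG
  rintro ⟨v, u, w, x, hvu, huw, hwv, hvx, hx⟩
  simp only [G.deg_eq_degree] at hdeg hx
  have hi := G.indepDomNum_le_indepDomNum_induce_add_one v
  rw [← SimpleGraph.coe_neighborFinset, ← Finset.coe_insert, ← Finset.coe_compl] at hi
  have hH := hminimal ((⊤ : G.Subgraph).induce ↑(insert v (G.neighborFinset v))ᶜ)
    (G.induce_top_ne_top (v := v) (by simp))
  have hwH := G.wtGraph_induce_top_le (insert v (G.neighborFinset v))ᶜ
  rw [compl_compl] at hwH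
  have hQwt := G.sum_wt_insert_neighborFinset_of_pendant_triangle hvu huw hwv hvx hx (hdeg v)
  have hQedges := G.sum_card_neighborFinset_inter_compl_of_pendant_triangle hvu huw hwv hvx hx
    (hdeg v) (hdeg u) (hdeg w)
  rw [SimpleGraph.wtGraph_eq_sum,
    ← Finset.sum_add_sum_compl (insert v (G.neighborFinset v))] at hcounter
  omega
end

section
/- If G is a minimal counterexample (as defined in the context), then G contains no triangle having a vertex of degree 2. -/
open Set

/-!
Reducibility: if `P` is a nonempty independent set and `A = N[P]` its closed neighbourhood, then
`H = G - A` is a proper subgraph, and an independent dominating set of `H` together with `P` is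
one of `G`. Hence `14 i(G) ≤ w(H) + 14 |P|`. Passing from `G` to `H` removes the weight `w(A)`,
and a vertex outside `A` with exactly one neighbour in `A` gains `wtGain` of its degree, so a
minimal counterexample satisfies `w(A) < 14 |P| + ∑ gains` for every such `P`.

Around a triangle `v u w` with `deg v = 2`, a case analysis on the degrees of `u`, `w`, of their
third neighbours `x`, `y` and of the neighbours of `x` always finds a `P` (one of `{v}`, `{u}`,
`{x, w}`) violating this inequality. The absence of 4-cycles keeps the vertices involved distinct
and prevents a vertex outside `A` from having two neighbours in `A`.
-/

def degWt (d : ℕ) : ℕ :=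
  if d = 0 then 14 else if d = 1 then 9 else if d = 2 then 6 else 5

lemma wt_eq_degWt {V : Type*} (G : SimpleGraph V) (v : V) : wt G v = degWt (deg G v) := rfl

lemma degWt_antitone : Antitone degWt := by
  intro a b hab
  unfold degWt
  split_ifs <;> omega

def wtGain (d : ℕ) : ℕ :=
  degWt (d - 1) - degWt d

lemma degWt_sub_one (d : ℕ) : degWt (d - 1) = degWt d + wtGain d :=
  (Nat.add_sub_of_le (degWt_antitone (Nat.sub_le d 1))).symm

lemma wtGain_le_five (d : ℕ) : wtGain d ≤ 5 := by
  unfold wtGain degWt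
  split_ifs <;> omega

lemma wtGain_le_three {d : ℕ} (hd : d ≠ 1) : wtGain d ≤ 3 := by
  unfold wtGain degWt
  split_ifs <;> omega

lemma finsum_mem_eq_sum_ite {V M : Type*} [Fintype V] [AddCommMonoid M] (s : Set V)
    [DecidablePred (· ∈ s)] (f : V → M) : ∑ᶠ v ∈ s, f v = ∑ v, if v ∈ s then f v else 0 := by
  rw [finsum_mem_def, finsum_eq_sum_of_fintype]
  simp only [Set.indicator_apply]

lemma wtSet_insert {V : Type*} [Finite V] (G : SimpleGraph V) {a : V} {s : Set V} (h : a ∉ s) :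
    wtSet G (insert a s) = wt G a + wtSet G s :=
  finsum_mem_insert _ h (Set.toFinite s)

lemma wtSet_singleton {V : Type*} (G : SimpleGraph V) (a : V) : wtSet G {a} = wt G a :=
  finsum_mem_singleton

lemma finsum_mem_wtGain_le {V : Type*} [Finite V] (G : SimpleGraph V) (T : Set V) :
    ∑ᶠ t ∈ T, wtGain (deg G t) ≤ 5 * T.ncard := by
  rw [finsum_mem_eq_finite_toFinset_sum _ (Set.toFinite T),
    Set.ncard_eq_toFinset_card _ (Set.toFinite T), mul_comm]
  exact Finset.sum_le_card_nsmul _ _ 5 fun t _ => wtGain_le_five (deg G t)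

lemma NoFourCycle.eq_of_adj_of_adj {V : Type*} {G : SimpleGraph V} (hC : NoFourCycle G)
    {a b c d : V} (hab : a ≠ b) (hac : G.Adj a c) (hcb : G.Adj c b) (had : G.Adj a d) (hdb : G.Adj d b) : c = d := by
  by_contra hcd
  exact hC ⟨a, c, b, d, G.ne_of_adj hac, hab, G.ne_of_adj had, G.ne_of_adj hcb, hcd,
    G.ne_of_adj hdb.symm, hac, hcb, hdb.symm, had.symm⟩

namespace SimpleGraph

variable {V : Type*} {G : SimpleGraph V}

def closedNbhd (G : SimpleGraph V) (P : Set V) : Set V :=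
  P ∪ ⋃ p ∈ P, G.neighborSet p

lemma subset_closedNbhd (P : Set V) : P ⊆ G.closedNbhd P :=
  Set.subset_union_left

lemma closedNbhd_singleton (v : V) : G.closedNbhd {v} = insert v (G.neighborSet v) := by
  rw [closedNbhd, Set.biUnion_singleton, Set.singleton_union]

lemma mem_closedNbhd {P : Set V} {a : V} :
    a ∈ G.closedNbhd P ↔ a ∈ P ∨ ∃ p ∈ P, G.Adj p a := by
  simp [closedNbhd]

lemma deg_eq_two {v a b : V} (h : G.neighborSet v = {a, b}) (hab : a ≠ b) : deg G v = 2 := by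
  rw [deg, h, Set.ncard_pair hab]

section Finite

variable [Finite V]

lemma deg_eq_three {v a b c : V} (h : G.neighborSet v = {a, b, c}) (hab : a ≠ b) (hac : a ≠ c)
    (hbc : b ≠ c) : deg G v = 3 := by
  rw [deg, h, Set.ncard_insert_of_notMem (by simp [hab, hac]), Set.ncard_pair hbc]

lemma deg_pos {v a : V} (h : G.Adj v a) : 0 < deg G v :=
  (Set.ncard_pos (Set.toFinite _)).2 ⟨a, h⟩

lemma ncard_le_deg {v : V} {s : Set V} (hs : s ⊆ G.neighborSet v) : s.ncard ≤ deg G v :=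
  Set.ncard_le_ncard hs

lemma neighborSet_eq_of_subset {v : V} {s : Set V} (hs : s ⊆ G.neighborSet v)
    (h : deg G v ≤ s.ncard) : G.neighborSet v = s :=
  (Set.eq_of_subset_of_ncard_le hs h).symm

lemma exists_neighborSet_eq_insert {v : V} {s : Set V} (hs : s ⊆ G.neighborSet v)
    (h : deg G v = s.ncard + 1) : ∃ x ∉ s, G.neighborSet v = insert x s := by
  obtain ⟨x, hx, hxs⟩ := Set.exists_mem_notMem_of_ncard_lt_ncard (s := s)
    (t := G.neighborSet v) (by unfold deg at h; omega)
  refine ⟨x, hxs, neighborSet_eq_of_subset (Set.insert_subset hx hs) ?_⟩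
  rw [Set.ncard_insert_of_notMem hxs]
  exact h.le

lemma neighborSet_eq_pair_or_exists {v a b : V} (hv : deg G v ≤ 3) (ha : G.Adj v a)
    (hb : G.Adj v b) (hab : a ≠ b) :
    G.neighborSet v = {a, b} ∨ ∃ x ∉ ({a, b} : Set V), G.neighborSet v = {x, a, b} := by
  have hs : {a, b} ⊆ G.neighborSet v := Set.insert_subset_iff.2 ⟨ha, by simpa using hb⟩
  have h2 := ncard_le_deg hs
  rw [Set.ncard_pair hab] at h2
  obtain hv2 | hv3 : deg G v = 2 ∨ deg G v = 3 := by omega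
  · exact Or.inl (neighborSet_eq_of_subset hs (by rw [Set.ncard_pair hab, hv2]))
  · exact Or.inr (exists_neighborSet_eq_insert hs (by rw [Set.ncard_pair hab, hv3]))

lemma exists_isIndepDomSet_ncard_eq (G : SimpleGraph V) :
    ∃ S, IsIndepDomSet G S ∧ S.ncard = indepDomNum G := by
  obtain ⟨S, hS, hmax⟩ := Set.Finite.exists_maximalFor Set.ncard {S : Set V | G.IsIndepSet S}
    (Set.toFinite _) ⟨∅, by simp⟩
  have hdom : IsDomSet G S := by
    intro v hv
    by_contra! hdom
    have hins : G.IsIndepSet (insert v S) :=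
      Set.Pairwise.insert hS fun s hs _ => ⟨fun h => hdom s hs h.symm, hdom s hs⟩
    have := hmax hins (Set.ncard_le_ncard (Set.subset_insert v S))
    rw [Set.ncard_insert_of_notMem hv] at this
    omega
  have hne : {n | ∃ S : Set V, IsIndepDomSet G S ∧ S.ncard = n}.Nonempty :=
    ⟨_, S, ⟨hdom, fun a ha b hb hab => hS ha hb (G.ne_of_adj hab) hab⟩, rfl⟩
  exact Nat.sInf_mem hne

end Finite

lemma indepDomNum_le_ncard {S : Set V} (hS : IsIndepDomSet G S) : indepDomNum G ≤ S.ncard :=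
  Nat.sInf_le ⟨S, hS, rfl⟩

lemma isIndepDomSet_image_val_union {P : Set V} (hP : G.IsIndepSet P)
    {S : Set ↥(G.closedNbhd P)ᶜ}
    (hS : IsIndepDomSet ((⊤ : G.Subgraph).induce (G.closedNbhd P)ᶜ).coe S) :
    IsIndepDomSet G (Subtype.val '' S ∪ P) := by
  constructor
  · intro q hq
    by_cases hqA : q ∈ G.closedNbhd P
    · obtain hqP | ⟨p, hp, hpq⟩ := mem_closedNbhd.1 hqA
      · exact absurd (Or.inr hqP) hq
      · exact ⟨p, Or.inr hp, hpq⟩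
    · obtain ⟨s, hs, hsq⟩ := hS.1 ⟨q, hqA⟩ fun h => hq (Or.inl ⟨_, h, rfl⟩)
      exact ⟨s, Or.inl ⟨s, hs, rfl⟩, hsq.2.2⟩
  · have hout (s : ↥(G.closedNbhd P)ᶜ) {p : V} (hp : p ∈ P) : ¬ G.Adj s p := fun h =>
      s.2 (mem_closedNbhd.2 (Or.inr ⟨p, hp, h.symm⟩))
    rintro _ (⟨a, ha, rfl⟩ | ha) _ (⟨b, hb, rfl⟩ | hb) hab
    · exact hS.2 a ha b hb ⟨a.2, b.2, hab⟩
    · exact hout a hb hab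
    · exact hout b ha hab.symm
    · exact hP ha hb (G.ne_of_adj hab) hab

lemma indepDomNum_le_indepDomNum_induce_compl_closedNbhd_add [Finite V] {P : Set V}
    (hP : G.IsIndepSet P) :
    indepDomNum G ≤ indepDomNum ((⊤ : G.Subgraph).induce (G.closedNbhd P)ᶜ).coe + P.ncard := by
  obtain ⟨S, hS, hcard⟩ :=
    exists_isIndepDomSet_ncard_eq ((⊤ : G.Subgraph).induce (G.closedNbhd P)ᶜ).coe
  calc indepDomNum G ≤ (Subtype.val '' S ∪ P).ncard :=
        indepDomNum_le_ncard (isIndepDomSet_image_val_union hP hS)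
    _ ≤ (Subtype.val '' S).ncard + P.ncard := Set.ncard_union_le _ _
    _ = _ := by rw [Set.ncard_image_of_injective _ Subtype.val_injective, hcard]

lemma deg_induce_compl_coe (A : Set V) (t : ↥Aᶜ) :
    deg ((⊤ : G.Subgraph).induce Aᶜ).coe t = (G.neighborSet t ∩ Aᶜ).ncard := by
  have h : ((⊤ : G.Subgraph).induce Aᶜ).coe.neighborSet t
      = Subtype.val ⁻¹' (G.neighborSet t ∩ Aᶜ) := by
    ext r
    simp only [Set.mem_preimage, Set.mem_inter_iff, mem_neighborSet]
    exact ⟨fun h => ⟨h.2.2, h.2.1⟩, fun h => ⟨t.2, h.2, h.1⟩⟩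
  unfold deg
  rw [h, Set.ncard_preimage_of_injective_subset_range Subtype.val_injective
    (fun r hr => ⟨⟨r, hr.2⟩, rfl⟩)]

lemma wtGraph_induce_compl (A : Set V) :
    wtGraph ((⊤ : G.Subgraph).induce Aᶜ).coe = ∑ᶠ t ∈ Aᶜ, degWt (G.neighborSet t ∩ Aᶜ).ncard := by
  rw [wtGraph, wtSet, finsum_mem_univ, ← finsum_set_coe_eq_finsum_mem]
  exact finsum_congr fun t => congrArg degWt (deg_induce_compl_coe A t)

section Deletion

variable [Finite V] {A T : Set V}

lemma degWt_ncard_inter_compl_le (hAT : ∀ a ∈ A, G.neighborSet a ⊆ A ∪ T)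
    (hA : ∀ t ∉ A, ∀ a ∈ A, ∀ b ∈ A, t ∈ G.neighborSet a → t ∈ G.neighborSet b → a = b)
    {t : V} (ht : t ∉ A) [Decidable (t ∈ T)] :
    degWt (G.neighborSet t ∩ Aᶜ).ncard ≤ wt G t + if t ∈ T then wtGain (deg G t) else 0 := by
  have hsplit : (G.neighborSet t ∩ A).ncard + (G.neighborSet t ∩ Aᶜ).ncard = deg G t := by
    rw [← Set.sdiff_eq]
    exact Set.ncard_inter_add_ncard_sdiff_eq_ncard _ _
  rw [wt_eq_degWt]
  split_ifs with hT
  · have hle : (G.neighborSet t ∩ A).ncard ≤ 1 := (Set.ncard_le_one (Set.toFinite _)).2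
      fun a ha b hb => hA t ht a ha.2 b hb.2 ha.1.symm hb.1.symm
    rw [← degWt_sub_one]
    exact degWt_antitone (by omega)
  · have hempty : G.neighborSet t ∩ A = ∅ := Set.eq_empty_of_forall_notMem
      fun a ⟨hta, ha⟩ => (hAT a ha hta.symm).elim ht hT
    rw [hempty, Set.ncard_empty, zero_add] at hsplit
    rw [hsplit, add_zero]

lemma wtGraph_induce_compl_add_wtSet_le [Fintype V] (hAT : ∀ a ∈ A, G.neighborSet a ⊆ A ∪ T)
    (hA : ∀ t ∉ A, ∀ a ∈ A, ∀ b ∈ A, t ∈ G.neighborSet a → t ∈ G.neighborSet b → a = b) :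
    wtGraph ((⊤ : G.Subgraph).induce Aᶜ).coe + wtSet G A
      ≤ wtGraph G + ∑ᶠ t ∈ T, wtGain (deg G t) := by
  classical
  rw [wtGraph_induce_compl, wtGraph, wtSet, wtSet, finsum_mem_eq_sum_ite, finsum_mem_eq_sum_ite,
    finsum_mem_eq_sum_ite, finsum_mem_eq_sum_ite, ← Finset.sum_add_distrib,
    ← Finset.sum_add_distrib]
  refine Finset.sum_le_sum fun t _ => ?_
  by_cases ht : t ∈ A
  · simp [ht]
  · simpa [ht] using degWt_ncard_inter_compl_le hAT hA ht

end Deletion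

end SimpleGraph

section Reduction

open SimpleGraph

variable {V : Type*} [Fintype V] {G : SimpleGraph V}

theorem MinimalCounterexample.wtSet_lt (hG : MinimalCounterexample G) {P A T : Set V}
    (hP : G.IsIndepSet P) (hPne : P.Nonempty) (hPA : G.closedNbhd P = A)
    (hAT : ∀ a ∈ A, G.neighborSet a ⊆ A ∪ T)
    (hA : ∀ t ∉ A, ∀ a ∈ A, ∀ b ∈ A, t ∈ G.neighborSet a → t ∈ G.neighborSet b → a = b) :
    wtSet G A < 14 * P.ncard + ∑ᶠ t ∈ T, wtGain (deg G t) := by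
  subst hPA
  obtain ⟨-, -, hGlt, hmin⟩ := hG
  have hne : (⊤ : G.Subgraph).induce (G.closedNbhd P)ᶜ ≠ ⊤ := fun h => by
    obtain ⟨p, hp⟩ := hPne
    have hp' : p ∈ ((⊤ : G.Subgraph).induce (G.closedNbhd P)ᶜ).verts := by rw [h]; trivial
    exact hp' (subset_closedNbhd P hp)
  have hH := hmin _ hne
  have hi := indepDomNum_le_indepDomNum_induce_compl_closedNbhd_add hP
  have hw := wtGraph_induce_compl_add_wtSet_le hAT hA
  omega

end Reduction

section Triangle

open SimpleGraph

variable {V : Type*} [Fintype V] {G : SimpleGraph V}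

theorem MinimalCounterexample.false_of_isolated_triangle (hG : MinimalCounterexample G)
    {v u w : V} (hNv : G.neighborSet v = {u, w}) (hNu : G.neighborSet u = {v, w})
    (hNw : G.neighborSet w = {v, u}) : False := by
  have hvu : G.Adj v u := by simp [← mem_neighborSet, hNv]
  have hvw : G.Adj v w := by simp [← mem_neighborSet, hNv]
  have huw : G.Adj u w := by simp [← mem_neighborSet, hNu]
  have h := hG.wtSet_lt (P := {v}) (A := {v, u, w}) (T := ∅) (by simp) (by simp)
    (by rw [closedNbhd_singleton, hNv])
    (by simp [hNv, hNu, hNw, Set.insert_subset_iff])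
    (by simp +contextual [-mem_neighborSet, hNv, hNu, hNw])
  rw [wtSet_insert G (by simp [hvu.ne, hvw.ne]), wtSet_insert G (by simp [huw.ne]),
    wtSet_singleton, finsum_mem_empty, Set.ncard_singleton] at h
  simp only [wt_eq_degWt, deg_eq_two hNv huw.ne, deg_eq_two hNu hvw.ne,
    deg_eq_two hNw hvu.ne] at h
  exact absurd h (by decide)

theorem MinimalCounterexample.false_of_pendant_triangle_of_deg_eq_three
    (hG : MinimalCounterexample G) {v u w x : V} (hNv : G.neighborSet v = {u, w})
    (hNu : G.neighborSet u = {x, v, w}) (hx : x ∉ ({v, w} : Set V))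
    (hNw : G.neighborSet w = {v, u}) (hdx : deg G x = 3) : False := by
  have hvu : G.Adj v u := by simp [← mem_neighborSet, hNv]
  have hvw : G.Adj v w := by simp [← mem_neighborSet, hNv]
  have huw : G.Adj u w := by simp [← mem_neighborSet, hNu]
  simp only [Set.mem_insert_iff, Set.mem_singleton_iff, not_or] at hx
  have h := hG.wtSet_lt (P := {v}) (A := {v, u, w}) (T := {x}) (by simp) (by simp)
    (by rw [closedNbhd_singleton, hNv])
    (by simp [hNv, hNu, hNw, Set.insert_subset_iff])
    (by simp +contextual [-mem_neighborSet, hNv, hNu, hNw])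
  rw [wtSet_insert G (by simp [hvu.ne, hvw.ne]), wtSet_insert G (by simp [huw.ne]),
    wtSet_singleton, finsum_mem_singleton, Set.ncard_singleton] at h
  simp only [wt_eq_degWt, deg_eq_two hNv huw.ne, deg_eq_three hNu hx.1 hx.2 hvw.ne,
    deg_eq_two hNw hvu.ne, hdx] at h
  exact absurd h (by decide)

theorem MinimalCounterexample.false_of_pendant_triangle_of_deg_ne_three
    (hG : MinimalCounterexample G) {v u w x : V} (hNv : G.neighborSet v = {u, w})
    (hNu : G.neighborSet u = {x, v, w}) (hx : x ∉ ({v, w} : Set V))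
    (hNw : G.neighborSet w = {v, u}) (hdx : deg G x ≠ 3) : False := by
  have hvu : G.Adj v u := by simp [← mem_neighborSet, hNv]
  have hvw : G.Adj v w := by simp [← mem_neighborSet, hNv]
  have huw : G.Adj u w := by simp [← mem_neighborSet, hNu]
  have hux : G.Adj u x := by simp [← mem_neighborSet, hNu]
  simp only [Set.mem_insert_iff, Set.mem_singleton_iff, not_or] at hx
  have h := hG.wtSet_lt (P := {u}) (A := {u, x, v, w}) (T := G.neighborSet x \ {u})
    (by simp) (by simp)
    (by rw [closedNbhd_singleton, hNu])
    (by simp only [Set.mem_insert_iff, Set.mem_singleton_iff, forall_eq_or_imp, forall_eq]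
        simp only [hNv, hNu, hNw, Set.insert_subset_iff]
        refine ⟨by simp, fun t ht => ?_, by simp, by simp⟩
        by_cases htu : t = u <;> simp [htu, ht])
    (by simp +contextual [-mem_neighborSet, hNv, hNu, hNw])
  have hT := finsum_mem_wtGain_le G (G.neighborSet x \ {u})
  rw [Set.ncard_sdiff_singleton_of_mem ((G.mem_neighborSet x u).2 hux.symm)] at hT
  change _ ≤ 5 * (deg G x - 1) at hT
  rw [wtSet_insert G (by simp [hux.ne, hvu.ne', huw.ne]),
    wtSet_insert G (by simp [hx.1, hx.2]), wtSet_insert G (by simp [hvw.ne]),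
    wtSet_singleton, Set.ncard_singleton] at h
  simp only [wt_eq_degWt, deg_eq_two hNv huw.ne, deg_eq_three hNu hx.1 hx.2 hvw.ne,
    deg_eq_two hNw hvu.ne] at h
  have hx1 : 0 < deg G x := deg_pos hux.symm
  have hx3 : deg G x ≤ 3 := hG.1 x
  generalize ∑ᶠ t ∈ G.neighborSet x \ {u}, wtGain (deg G t) = S at h hT
  interval_cases deg G x <;> simp [degWt] at h <;> omega

theorem MinimalCounterexample.exists_neighborSet_eq_of_triangle (hG : MinimalCounterexample G)
    {v u w : V} (hNv : G.neighborSet v = {u, w}) (huw : G.Adj u w) :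
    ∃ x ∉ ({v, w} : Set V), G.neighborSet u = {x, v, w} := by
  have hvu : G.Adj v u := by simp [← mem_neighborSet, hNv]
  have hvw : G.Adj v w := by simp [← mem_neighborSet, hNv]
  refine (neighborSet_eq_pair_or_exists (hG.1 u) hvu.symm huw hvw.ne).resolve_left fun hNu => ?_
  obtain hNw | ⟨x, hx, hNw⟩ := neighborSet_eq_pair_or_exists (hG.1 w) hvw.symm huw.symm hvu.ne
  · exact hG.false_of_isolated_triangle hNv hNu hNw
  · have hNv' : G.neighborSet v = {w, u} := by rw [hNv, Set.pair_comm]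
    by_cases hdx : deg G x = 3
    · exact hG.false_of_pendant_triangle_of_deg_eq_three hNv' hNw hx hNu hdx
    · exact hG.false_of_pendant_triangle_of_deg_ne_three hNv' hNw hx hNu hdx

end Triangle

section Frame

open SimpleGraph

variable {V : Type*} {G : SimpleGraph V}

structure TriangleFrame (G : SimpleGraph V) (v u w x y : V) : Prop where
  neighborSet_v : G.neighborSet v = {u, w}
  neighborSet_u : G.neighborSet u = {x, v, w}
  neighborSet_w : G.neighborSet w = {y, v, u}
  x_notMem : x ∉ ({v, w} : Set V)
  y_notMem : y ∉ ({v, u} : Set V)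

namespace TriangleFrame

variable {v u w x y : V}

lemma symm (hf : TriangleFrame G v u w x y) : TriangleFrame G v w u y x :=
  ⟨by rw [hf.neighborSet_v, Set.pair_comm], hf.neighborSet_w, hf.neighborSet_u, hf.y_notMem,
    hf.x_notMem⟩

lemma adj_vu (hf : TriangleFrame G v u w x y) : G.Adj v u := by
  simp [← mem_neighborSet, hf.neighborSet_v]

lemma adj_vw (hf : TriangleFrame G v u w x y) : G.Adj v w := by
  simp [← mem_neighborSet, hf.neighborSet_v]

lemma adj_uw (hf : TriangleFrame G v u w x y) : G.Adj u w := by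
  simp [← mem_neighborSet, hf.neighborSet_u]

lemma adj_ux (hf : TriangleFrame G v u w x y) : G.Adj u x := by
  simp [← mem_neighborSet, hf.neighborSet_u]

lemma triangle_ne (hf : TriangleFrame G v u w x y) : v ≠ u ∧ v ≠ w ∧ u ≠ w :=
  ⟨hf.adj_vu.ne, hf.adj_vw.ne, hf.adj_uw.ne⟩

lemma x_ne (hf : TriangleFrame G v u w x y) : x ≠ v ∧ x ≠ u ∧ x ≠ w := by
  have hx := hf.x_notMem
  simp only [Set.mem_insert_iff, Set.mem_singleton_iff, not_or] at hx
  exact ⟨hx.1, hf.adj_ux.ne', hx.2⟩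

lemma deg_v (hf : TriangleFrame G v u w x y) : deg G v = 2 :=
  deg_eq_two hf.neighborSet_v hf.adj_uw.ne

lemma deg_u [Finite V] (hf : TriangleFrame G v u w x y) : deg G u = 3 :=
  deg_eq_three hf.neighborSet_u hf.x_ne.1 hf.x_ne.2.2 hf.adj_vw.ne

lemma x_ne_y (hf : TriangleFrame G v u w x y) (hC : NoFourCycle G) : x ≠ y := by
  rintro rfl
  have hwx : G.Adj w x := by simp [← mem_neighborSet, hf.neighborSet_w]
  exact hf.x_notMem (Or.inl (hC.eq_of_adj_of_adj hf.adj_uw.ne hf.adj_vu.symm hf.adj_vw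
    hf.adj_ux hwx.symm).symm)

lemma not_adj_xy (hf : TriangleFrame G v u w x y) (hC : NoFourCycle G) : ¬ G.Adj x y := by
  intro hxy
  have hyu : u ≠ y := fun h => hf.y_notMem (by simp [h])
  exact hf.x_notMem (Or.inr (hC.eq_of_adj_of_adj hyu hf.adj_ux hxy hf.adj_uw hf.symm.adj_ux))

lemma z_ne (hf : TriangleFrame G v u w x y) (hC : NoFourCycle G) {z : V}
    (hNx : G.neighborSet x = {z, u}) : z ≠ v ∧ z ≠ w ∧ z ≠ x ∧ z ≠ y := by
  obtain ⟨hxv, hxu, hxw⟩ := hf.x_ne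
  have hxz : G.Adj x z := by simp [← mem_neighborSet, hNx]
  refine ⟨?_, ?_, hxz.ne', fun h => hf.not_adj_xy hC (h ▸ hxz)⟩
  · rintro rfl
    have : x ∈ G.neighborSet z := hxz.symm
    simp [hf.neighborSet_v, hxu, hxw] at this
  · rintro rfl
    have : x ∈ G.neighborSet z := hxz.symm
    simp [hf.neighborSet_w, hf.x_ne_y hC, hxv, hxu] at this

end TriangleFrame

end Frame

section FrameCases

open SimpleGraph

variable {V : Type*} [Fintype V] {G : SimpleGraph V} {v u w x y : V}

theorem MinimalCounterexample.false_of_frame_deg_one (hG : MinimalCounterexample G)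
    (hf : TriangleFrame G v u w x y) (hdx : deg G x = 1) : False := by
  obtain ⟨hvu, hvw, huw⟩ := hf.triangle_ne
  obtain ⟨hxv, hxu, hxw⟩ := hf.x_ne
  have hNv := hf.neighborSet_v
  have hNu := hf.neighborSet_u
  have hNw := hf.neighborSet_w
  have hNx : G.neighborSet x = {u} := neighborSet_eq_of_subset
    (by simpa using hf.adj_ux.symm) (by rw [hdx, Set.ncard_singleton])
  have h := hG.wtSet_lt (P := {u}) (A := {u, x, v, w}) (T := {y}) (by simp) (by simp)
    (by rw [closedNbhd_singleton, hNu])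
    (by simp [hNv, hNu, hNw, hNx, Set.insert_subset_iff])
    (by simp +contextual [-mem_neighborSet, hNv, hNu, hNw, hNx])
  rw [wtSet_insert G (by simp [hxu.symm, hvu.symm, huw]), wtSet_insert G (by simp [hxv, hxw]),
    wtSet_insert G (by simp [hvw]), wtSet_singleton, finsum_mem_singleton,
    Set.ncard_singleton] at h
  simp only [wt_eq_degWt, hf.deg_v, hf.deg_u, hf.symm.deg_u, hdx] at h
  have := wtGain_le_five (deg G y)
  simp [degWt] at h
  omega

theorem MinimalCounterexample.false_of_frame_deg_two_of_leaves (hG : MinimalCounterexample G)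
    (hf : TriangleFrame G v u w x y) {z : V} (hNx : G.neighborSet x = {z, u}) (hz : z ≠ u)
    (hdy : deg G y = 1) (hdz : deg G z = 1) : False := by
  obtain ⟨hvu, hvw, huw⟩ := hf.triangle_ne
  obtain ⟨hxv, hxu, hxw⟩ := hf.x_ne
  obtain ⟨hyv, hyw, hyu⟩ := hf.symm.x_ne
  obtain ⟨hzv, hzw, hzx, hzy⟩ := hf.z_ne hG.2.1 hNx
  have hxy := hf.x_ne_y hG.2.1
  have hNv := hf.neighborSet_v
  have hNu := hf.neighborSet_u
  have hNw := hf.neighborSet_w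
  have hNy : G.neighborSet y = {w} := neighborSet_eq_of_subset
    (by simpa using hf.symm.adj_ux.symm) (by rw [hdy, Set.ncard_singleton])
  have hxz : G.Adj x z := by simp [← mem_neighborSet, hNx]
  have hNz : G.neighborSet z = {x} := neighborSet_eq_of_subset
    (by simpa using hxz.symm) (by rw [hdz, Set.ncard_singleton])
  have hxw' : ¬ G.Adj x w := by simp [← mem_neighborSet, hNx, hzw.symm, huw.symm]
  have h := hG.wtSet_lt (P := {x, w}) (A := {x, w, z, u, y, v}) (T := ∅)
    (Set.pairwise_pair.2 fun _ => ⟨hxw', fun h => hxw' h.symm⟩) (by simp)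
    (by ext t
        simp only [closedNbhd, Set.biUnion_insert, Set.biUnion_singleton, hNx, hNw]
        simp only [Set.mem_union, Set.mem_insert_iff, Set.mem_singleton_iff]
        tauto)
    (by simp [hNv, hNu, hNw, hNx, hNy, hNz, Set.insert_subset_iff])
    (by simp +contextual [-mem_neighborSet, hNv, hNu, hNw, hNx, hNy, hNz])
  rw [wtSet_insert G (by simp [hxw, hzx.symm, hxu, hxy, hxv]),
    wtSet_insert G (by simp [hzw.symm, huw.symm, hyw.symm, hvw.symm]),
    wtSet_insert G (by simp [hz, hzy, hzv]), wtSet_insert G (by simp [hyu.symm, hvu.symm]),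
    wtSet_insert G (by simp [hyv]), wtSet_singleton, finsum_mem_empty, Set.ncard_pair hxw] at h
  simp only [wt_eq_degWt, hf.deg_v, hf.deg_u, hf.symm.deg_u, deg_eq_two hNx hz, hdy, hdz] at h
  exact absurd h (by decide)

theorem MinimalCounterexample.false_of_frame_deg_two (hG : MinimalCounterexample G)
    (hf : TriangleFrame G v u w x y) {z : V} (hNx : G.neighborSet x = {z, u}) (hz : z ≠ u)
    (hyz : deg G y ≠ 1 ∨ deg G z ≠ 1) : False := by
  obtain ⟨hvu, hvw, huw⟩ := hf.triangle_ne
  obtain ⟨hxv, hxu, hxw⟩ := hf.x_ne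
  obtain ⟨-, -, -, hzy⟩ := hf.z_ne hG.2.1 hNx
  have hNv := hf.neighborSet_v
  have hNu := hf.neighborSet_u
  have hNw := hf.neighborSet_w
  have h := hG.wtSet_lt (P := {u}) (A := {u, x, v, w}) (T := {y, z}) (by simp) (by simp)
    (by rw [closedNbhd_singleton, hNu])
    (by simp [hNv, hNu, hNw, hNx, Set.insert_subset_iff])
    (by simp +contextual [-mem_neighborSet, hNv, hNu, hNw, hNx, hzy, hzy.symm])
  rw [wtSet_insert G (by simp [hxu.symm, hvu.symm, huw]), wtSet_insert G (by simp [hxv, hxw]),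
    wtSet_insert G (by simp [hvw]), wtSet_singleton, finsum_mem_pair hzy.symm,
    Set.ncard_singleton] at h
  simp only [wt_eq_degWt, hf.deg_v, hf.deg_u, hf.symm.deg_u, deg_eq_two hNx hz] at h
  have hgy := wtGain_le_five (deg G y)
  have hgz := wtGain_le_five (deg G z)
  simp [degWt] at h
  rcases hyz with hyz | hyz <;> have := wtGain_le_three hyz <;> omega

theorem MinimalCounterexample.deg_eq_three_of_frame (hG : MinimalCounterexample G)
    (hf : TriangleFrame G v u w x y) : deg G x = 3 := by
  have hx := deg_pos hf.adj_ux.symm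
  have hx3 := hG.1 x
  by_contra hx3'
  obtain hx1 | hx2 : deg G x = 1 ∨ deg G x = 2 := by omega
  · exact hG.false_of_frame_deg_one hf hx1
  obtain ⟨z, hz, hNx⟩ := exists_neighborSet_eq_insert (s := {u})
    (by simpa using hf.adj_ux.symm) (by rw [hx2, Set.ncard_singleton])
  rw [Set.mem_singleton_iff] at hz
  by_cases hyz : deg G y = 1 ∧ deg G z = 1
  · exact hG.false_of_frame_deg_two_of_leaves hf hNx hz hyz.1 hyz.2
  · exact hG.false_of_frame_deg_two hf hNx hz (not_and_or.1 hyz)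

theorem MinimalCounterexample.false_of_cubic_frame (hG : MinimalCounterexample G)
    (hf : TriangleFrame G v u w x y) (hdx : deg G x = 3) (hdy : deg G y = 3) : False := by
  obtain ⟨hvu, hvw, huw⟩ := hf.triangle_ne
  have hxy := hf.x_ne_y hG.2.1
  have hNv := hf.neighborSet_v
  have hNu := hf.neighborSet_u
  have hNw := hf.neighborSet_w
  have h := hG.wtSet_lt (P := {v}) (A := {v, u, w}) (T := {x, y}) (by simp) (by simp)
    (by rw [closedNbhd_singleton, hNv])
    (by simp [hNv, hNu, hNw, Set.insert_subset_iff])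
    (by simp +contextual [-mem_neighborSet, hNv, hNu, hNw, hxy, hxy.symm])
  rw [wtSet_insert G (by simp [hvu, hvw]), wtSet_insert G (by simp [huw]),
    wtSet_singleton, finsum_mem_pair hxy, Set.ncard_singleton] at h
  simp only [wt_eq_degWt, hf.deg_v, hf.deg_u, hf.symm.deg_u, hdx, hdy] at h
  exact absurd h (by decide)

end FrameCases

/-- A minimal counterexample contains no triangle having a vertex of degree 2. -/
theorem no_triangle_with_deg_two_vertex {V : Type*} [Fintype V] (G : SimpleGraph V)
    (hG : MinimalCounterexample G) :
    ¬ ∃ v u w : V, G.Adj v u ∧ G.Adj u w ∧ G.Adj w v ∧ deg G v = 2 := by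
  rintro ⟨v, u, w, hvu, huw, hwv, hv⟩
  have hNv : G.neighborSet v = {u, w} := SimpleGraph.neighborSet_eq_of_subset
    (Set.insert_subset_iff.2 ⟨hvu, by simpa using hwv.symm⟩) (by rw [hv, Set.ncard_pair huw.ne])
  obtain ⟨x, hx, hNu⟩ := hG.exists_neighborSet_eq_of_triangle hNv huw
  obtain ⟨y, hy, hNw⟩ :=
    hG.exists_neighborSet_eq_of_triangle (by rw [hNv, Set.pair_comm]) huw.symm
  have hf : TriangleFrame G v u w x y := ⟨hNv, hNu, hNw, hx, hy⟩
  exact hG.false_of_cubic_frame hf (hG.deg_eq_three_of_frame hf) (hG.deg_eq_three_of_frame hf.symm)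
end
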